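/- Let A ⊂ R[x_0,…,x_n] be a graded subalgebra containing r² = Σ x_i² and closed under the Laplacian Δ. Then for each k ≥ 2, A_k = (A ∩ H_k) ⊕ r²·A_{k-2}, where H_k is the space of harmonic homogeneous polynomials of degree k. Consequently, if H(z) = Σ dim(A_k) z^k and G(z) = Σ dim(A ∩ H_k) z^k, then G(z) = (1 - z²)·H(z). -/

import Mathlib

/-!
The Fischer form `⟨p, q⟩ = ∑ α!·p_α·q_α` is positive definite on real polynomials, and for it
multiplication by `X i` is adjoint to `∂_i`, hence multiplication by `r²` is adjoint to `Δ`.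
As `A` is closed under both, they map `A_k` to `A_{k-2}` and back, so inside `A_k` the kernel
of `Δ` is the orthogonal complement of the finite-dimensional space `r²·A_{k-2}`. Since `r²·`
is injective this gives `dim A_k = dim (A ∩ H_k) + dim A_{k-2}` for `k ≥ 2`, while every
polynomial of degree `< 2` is harmonic; comparing coefficients, this is `G = (1 - z²)·H`.
-/

open MvPolynomial PowerSeries

/-- The polynomial Laplacian `Δ = ∑ i ∂²/∂x_i²` on `ℝ[x_0,…,x_n]`. -/
noncomputable def polyLaplacian (n : ℕ) :
    MvPolynomial (Fin (n + 1)) ℝ →ₗ[ℝ] MvPolynomial (Fin (n + 1)) ℝ :=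
  ∑ i, ((MvPolynomial.pderiv i).toLinearMap ∘ₗ (MvPolynomial.pderiv i).toLinearMap)

open scoped Nat

namespace Finsupp

variable {σ R : Type*} [Fintype σ]

theorem prod_factorial_add_single [CommSemiring R] (α : σ →₀ ℕ) (i : σ) :
    ∏ j, (((α + single i 1 : σ →₀ ℕ) j)! : R) = ((α i : R) + 1) * ∏ j, ((α j)! : R) := by
  classical
  have hfactor (j : σ) : (((α + single i 1 : σ →₀ ℕ) j)! : R) =
      (if j = i then (α i : R) + 1 else 1) * ((α j)! : R) := by
    by_cases h : j = i
    · subst h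
      simp [Nat.factorial_succ]
    · simp [h]
  rw [Finset.prod_congr rfl fun j _ => hfactor j, Finset.prod_mul_distrib, Finset.prod_ite_eq']
  simp

end Finsupp

namespace MvPolynomial

instance finiteDimensional_homogeneousSubmodule (σ K : Type*) [Finite σ] [Field K] (k : ℕ) :
    FiniteDimensional K (homogeneousSubmodule σ K k) :=
  Module.Finite.iff_fg.mpr (homogeneousSubmodule_fg σ K k)

variable {σ R : Type*} [Fintype σ]

section CommSemiring

variable [CommSemiring R]

noncomputable def fischerForm : LinearMap.BilinForm R (MvPolynomial σ R) :=
  (basisMonomials σ R).constr R fun α => (∏ i, ((α i)! : R)) • lcoeff R α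

theorem fischerForm_monomial (α : σ →₀ ℕ) (a : R) (q : MvPolynomial σ R) :
    fischerForm (monomial α a) q = a * (∏ i, ((α i)! : R)) * coeff α q := by
  have : monomial α a = a • basisMonomials σ R α := by
    rw [coe_basisMonomials, smul_monomial, smul_eq_mul, mul_one]
  rw [this, map_smul, fischerForm, Module.Basis.constr_basis]
  simp [mul_assoc]

theorem fischerForm_X_mul (i : σ) (p q : MvPolynomial σ R) :
    fischerForm (MvPolynomial.X i * p) q = fischerForm p (pderiv i q) := by
  classical
  induction p using MvPolynomial.induction_on' with
  | monomial α a =>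
    rw [X, monomial_mul, one_mul, add_comm, fischerForm_monomial, fischerForm_monomial,
      coeff_pderiv, Finsupp.prod_factorial_add_single]
    ring
  | add p₁ p₂ h₁ h₂ => simp only [mul_add, map_add, LinearMap.add_apply, h₁, h₂]

end CommSemiring

theorem fischerForm_apply [CommSemiring R] (p q : MvPolynomial σ R) :
    fischerForm p q = ∑ α ∈ p.support, (∏ i, ((α i)! : R)) * (coeff α p * coeff α q) := by
  conv_lhs => rw [p.as_sum]
  rw [map_sum, LinearMap.sum_apply]
  exact Finset.sum_congr rfl fun _ _ => by rw [fischerForm_monomial]; ring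

theorem eq_zero_of_fischerForm_self [CommRing R] [LinearOrder R] [IsStrictOrderedRing R]
    {p : MvPolynomial σ R} (hp : fischerForm p p = 0) : p = 0 := by
  have hpos (α : σ →₀ ℕ) : (0 : R) < ∏ i, ((α i)! : R) :=
    Finset.prod_pos fun i _ => by exact_mod_cast (α i).factorial_pos
  rw [fischerForm_apply, Finset.sum_eq_zero_iff_of_nonneg
    fun α _ => mul_nonneg (hpos α).le (mul_self_nonneg _)] at hp
  ext α
  by_contra hα
  rcases mul_eq_zero.mp (hp α (mem_support_iff.mpr hα)) with h | h
  · exact (hpos α).ne' h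
  · exact hα (mul_self_eq_zero.mp h)

end MvPolynomial

namespace LinearMap.BilinForm

open Module Submodule

section CommRing

variable {R M : Type*} [CommRing R] [AddCommGroup M] [Module R M] {β : LinearMap.BilinForm R M}

theorem disjoint_ker_range_of_isAdjointPair {D μ : M →ₗ[R] M}
    (hβ : ∀ x, β x x = 0 → x = 0) (hadj : IsAdjointPair β β μ D) :
    Disjoint (ker D) (range μ) := by
  rw [disjoint_def]
  rintro _ hker ⟨q, rfl⟩
  exact hβ _ (by rw [hadj, mem_ker.mp hker, map_zero])

end CommRing

variable {K M : Type*} [Field K] [AddCommGroup M] [Module K M] {β : LinearMap.BilinForm K M}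

theorem sup_orthogonal_eq_top {W : Submodule K M} [FiniteDimensional K W]
    (hβ : ∀ x ∈ W, β x x = 0 → x = 0) : W ⊔ β.orthogonal W = ⊤ := by
  have hW : (β.restrict W).flip.Nondegenerate :=
    ⟨fun x hx => Subtype.ext (hβ x x.2 (hx x)), fun x hx => Subtype.ext (hβ x x.2 (hx x))⟩
  refine eq_top_iff.mpr fun p _ => mem_sup.mpr ?_
  set w := ((β.restrict W).flip.toDual hW).symm ((β.flip p).domRestrict W)
  have hw (v : W) : β v w = β v p := apply_toDual_symm_apply (B := (β.restrict W).flip) _ v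
  refine ⟨w, w.2, p - w, mem_orthogonal_iff.mpr fun v hv => ?_, add_sub_cancel _ _⟩
  rw [map_sub, hw ⟨v, hv⟩, sub_self]

variable {D μ : M →ₗ[K] M} {N₁ N₂ : Submodule K M}

theorem inf_ker_sup_map_eq (hβ : ∀ x, β x x = 0 → x = 0) (hadj : IsAdjointPair β β μ D)
    [FiniteDimensional K N₂] (hD : N₁ ≤ N₂.comap D) (hμ : N₂.map μ ≤ N₁) :
    (N₁ ⊓ ker D) ⊔ N₂.map μ = N₁ := by
  refine le_antisymm (sup_le inf_le_left hμ) fun p hp => ?_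
  have hsup := sup_orthogonal_eq_top (β := β) (W := N₂.map μ) fun x _ => hβ x
  obtain ⟨w, hw, h, hh, rfl⟩ := mem_sup.mp (hsup ▸ mem_top : p ∈ _)
  have hhN₁ : h ∈ N₁ := by simpa using N₁.sub_mem hp (hμ hw)
  -- `β (D h) (D h) = β (μ (D h)) h`, and `μ (D h) ∈ N₂.map μ` is orthogonal to `h`.
  have hDh : D h = 0 := hβ _ <| by
    rw [← hadj]
    exact (mem_orthogonal_iff.mp hh) _ (mem_map_of_mem (hD hhN₁))
  exact add_mem (mem_sup_right hw) (mem_sup_left ⟨hhN₁, hDh⟩)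

theorem finrank_inf_ker_add_finrank_eq (hβ : ∀ x, β x x = 0 → x = 0)
    (hadj : IsAdjointPair β β μ D) (hμ_inj : Function.Injective μ)
    [FiniteDimensional K N₁] [FiniteDimensional K N₂] (hD : N₁ ≤ N₂.comap D)
    (hμ : N₂.map μ ≤ N₁) :
    finrank K ↥(N₁ ⊓ ker D) + finrank K N₂ = finrank K N₁ := by
  have hdisj : Disjoint (N₁ ⊓ ker D) (N₂.map μ) :=
    (disjoint_ker_range_of_isAdjointPair hβ hadj).mono inf_le_right map_le_range
  rw [(N₂.equivMapOfInjective μ hμ_inj).finrank_eq, ← finrank_sup_add_finrank_inf_eq,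
    hdisj.eq_bot, finrank_bot, add_zero, inf_ker_sup_map_eq hβ hadj hD hμ]

end LinearMap.BilinForm

namespace PowerSeries

theorem mk_eq_one_sub_X_pow_mul_mk {R : Type*} [CommRing R] {m : ℕ} {g h : ℕ → R}
    (hlow : ∀ k < m, g k = h k) (hhigh : ∀ k, g (k + m) + h k = h (k + m)) :
    mk g = (1 - X ^ m) * mk h := by
  ext k
  rw [sub_mul, one_mul, map_sub, coeff_X_pow_mul', coeff_mk, coeff_mk]
  split_ifs with hk
  · obtain ⟨j, rfl⟩ := Nat.exists_eq_add_of_le' hk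
    rw [coeff_mk, Nat.add_sub_cancel, ← hhigh, add_sub_cancel_right]
  · rw [hlow k (not_le.mp hk), sub_zero]

end PowerSeries

section Laplacian

variable {n k : ℕ} {p : MvPolynomial (Fin (n + 1)) ℝ}

theorem polyLaplacian_apply : polyLaplacian n p = ∑ i, pderiv i (pderiv i p) := by
  simp [polyLaplacian]

theorem MvPolynomial.IsHomogeneous.polyLaplacian (h : p.IsHomogeneous (k + 2)) :
    (_root_.polyLaplacian n p).IsHomogeneous k := by
  rw [polyLaplacian_apply]
  exact IsHomogeneous.sum _ _ _ fun i _ => h.pderiv.pderiv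

theorem polyLaplacian_eq_zero_of_isHomogeneous (h : p.IsHomogeneous k) (hk : k ≤ 1) :
    polyLaplacian n p = 0 := by
  have hconst (i : Fin (n + 1)) : (pderiv i p).totalDegree = 0 :=
    Nat.le_zero.mp <| (h.pderiv (i := i)).totalDegree_le.trans (by omega)
  rw [polyLaplacian_apply]
  refine Finset.sum_eq_zero fun i _ => ?_
  rw [totalDegree_eq_zero_iff_eq_C.mp (hconst i), pderiv_C]

theorem isAdjointPair_mulLeft_sum_X_sq_polyLaplacian :
    LinearMap.IsAdjointPair fischerForm fischerForm
      (LinearMap.mulLeft ℝ (∑ i, MvPolynomial.X i ^ 2 : MvPolynomial (Fin (n + 1)) ℝ))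
      (polyLaplacian n) := by
  intro q p
  rw [LinearMap.mulLeft_apply, Finset.sum_mul, map_sum, LinearMap.sum_apply, polyLaplacian_apply,
    map_sum]
  refine Finset.sum_congr rfl fun i _ => ?_
  rw [pow_two, mul_assoc, fischerForm_X_mul, fischerForm_X_mul]

theorem sum_X_sq_ne_zero : (∑ i, MvPolynomial.X i ^ 2 : MvPolynomial (Fin (n + 1)) ℝ) ≠ 0 := by
  intro h
  have hn : (n : ℝ) + 1 = 0 := by simpa using congrArg (eval fun _ => (1 : ℝ)) h
  exact Nat.cast_add_one_ne_zero n hn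

end Laplacian

section GradedPiece

variable {n : ℕ} {A : Subalgebra ℝ (MvPolynomial (Fin (n + 1)) ℝ)}

theorem inf_homogeneousSubmodule_le_comap_polyLaplacian (hΔ : ∀ p ∈ A, polyLaplacian n p ∈ A)
    (k : ℕ) :
    A.toSubmodule ⊓ homogeneousSubmodule (Fin (n + 1)) ℝ (k + 2) ≤
      (A.toSubmodule ⊓ homogeneousSubmodule (Fin (n + 1)) ℝ k).comap (polyLaplacian n) :=
  fun p hp => ⟨hΔ p hp.1, hp.2.polyLaplacian⟩

theorem map_mulLeft_sum_X_sq_inf_homogeneousSubmodule_le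
    (hr2 : (∑ i, MvPolynomial.X i ^ 2 : MvPolynomial (Fin (n + 1)) ℝ) ∈ A) (k : ℕ) :
    (A.toSubmodule ⊓ homogeneousSubmodule (Fin (n + 1)) ℝ k).map
        (LinearMap.mulLeft ℝ (∑ i, MvPolynomial.X i ^ 2)) ≤
      A.toSubmodule ⊓ homogeneousSubmodule (Fin (n + 1)) ℝ (k + 2) := by
  rintro _ ⟨q, hq, rfl⟩
  refine ⟨A.mul_mem hr2 hq.1, ?_⟩
  have := (IsHomogeneous.sum Finset.univ _ _ fun i _ => isHomogeneous_X_pow i 2).mul hq.2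
  rwa [add_comm 2 k] at this

end GradedPiece

theorem laplacian_algebra_harmonic_decomposition_general (n : ℕ)
    (A : Subalgebra ℝ (MvPolynomial (Fin (n + 1)) ℝ))
    (hr2 : (∑ i, (MvPolynomial.X i) ^ 2 : MvPolynomial (Fin (n + 1)) ℝ) ∈ A)
    (hΔ : ∀ p ∈ A, polyLaplacian n p ∈ A) :
    (∀ k : ℕ, 2 ≤ k →
        (A.toSubmodule ⊓ MvPolynomial.homogeneousSubmodule (Fin (n + 1)) ℝ k =
          (A.toSubmodule ⊓ MvPolynomial.homogeneousSubmodule (Fin (n + 1)) ℝ k ⊓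
            LinearMap.ker (polyLaplacian n)) ⊔
          Submodule.map (LinearMap.mulLeft ℝ (∑ i, (MvPolynomial.X i) ^ 2))
            (A.toSubmodule ⊓
              MvPolynomial.homogeneousSubmodule (Fin (n + 1)) ℝ (k - 2))) ∧
        Disjoint
          (A.toSubmodule ⊓ MvPolynomial.homogeneousSubmodule (Fin (n + 1)) ℝ k ⊓
            LinearMap.ker (polyLaplacian n))
          (Submodule.map (LinearMap.mulLeft ℝ (∑ i, (MvPolynomial.X i) ^ 2))
            (A.toSubmodule ⊓
              MvPolynomial.homogeneousSubmodule (Fin (n + 1)) ℝ (k - 2)))) ∧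
      PowerSeries.mk (fun k =>
          (Module.finrank ℝ
            ↥(A.toSubmodule ⊓ MvPolynomial.homogeneousSubmodule (Fin (n + 1)) ℝ k ⊓
              LinearMap.ker (polyLaplacian n)) : ℝ)) =
        (1 - (PowerSeries.X : PowerSeries ℝ) ^ 2) *
          PowerSeries.mk (fun k =>
            (Module.finrank ℝ
              ↥(A.toSubmodule ⊓
                MvPolynomial.homogeneousSubmodule (Fin (n + 1)) ℝ k) : ℝ)) := by
  have hβ (p : MvPolynomial (Fin (n + 1)) ℝ) : fischerForm p p = 0 → p = 0 :=
    eq_zero_of_fischerForm_self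
  have hadj := isAdjointPair_mulLeft_sum_X_sq_polyLaplacian (n := n)
  have hinj : Function.Injective (LinearMap.mulLeft ℝ _) :=
    mul_right_injective₀ (sum_X_sq_ne_zero (n := n))
  have hΔA := inf_homogeneousSubmodule_le_comap_polyLaplacian hΔ
  have hr2A := map_mulLeft_sum_X_sq_inf_homogeneousSubmodule_le hr2
  refine ⟨fun k hk => ?_, PowerSeries.mk_eq_one_sub_X_pow_mul_mk (fun k hk => ?_) fun k => ?_⟩
  · obtain ⟨j, rfl⟩ := Nat.exists_eq_add_of_le' hk
    rw [Nat.add_sub_cancel]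
    exact ⟨(LinearMap.BilinForm.inf_ker_sup_map_eq hβ hadj (hΔA j) (hr2A j)).symm,
      (LinearMap.BilinForm.disjoint_ker_range_of_isAdjointPair hβ hadj).mono inf_le_right
        LinearMap.map_le_range⟩
  · rw [inf_eq_left.mpr fun p hp => polyLaplacian_eq_zero_of_isHomogeneous hp.2 (by omega)]
  · exact_mod_cast
      LinearMap.BilinForm.finrank_inf_ker_add_finrank_eq hβ hadj hinj (hΔA k) (hr2A k)

/-- For a graded subalgebra `A ⊆ ℝ[x_0,…,x_n]` containing `r²` and closed
under `Δ`: for `k ≥ 2`, `A_k = (A ∩ H_k) ⊕ r²·A_{k-2}`, and consequently the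
generating series satisfy `G(z) = (1 - z²)·H(z)`. -/
theorem laplacian_algebra_harmonic_decomposition (n : ℕ)
    (A : Subalgebra ℝ (MvPolynomial (Fin (n + 1)) ℝ))
    (hgraded : ∀ p ∈ A, ∀ k, MvPolynomial.homogeneousComponent k p ∈ A)
    (hr2 : (∑ i, (MvPolynomial.X i) ^ 2 : MvPolynomial (Fin (n + 1)) ℝ) ∈ A)
    (hΔ : ∀ p ∈ A, polyLaplacian n p ∈ A) :
    (∀ k : ℕ, 2 ≤ k →
        (A.toSubmodule ⊓ MvPolynomial.homogeneousSubmodule (Fin (n + 1)) ℝ k =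
          (A.toSubmodule ⊓ MvPolynomial.homogeneousSubmodule (Fin (n + 1)) ℝ k ⊓
            LinearMap.ker (polyLaplacian n)) ⊔
          Submodule.map (LinearMap.mulLeft ℝ (∑ i, (MvPolynomial.X i) ^ 2))
            (A.toSubmodule ⊓
              MvPolynomial.homogeneousSubmodule (Fin (n + 1)) ℝ (k - 2))) ∧
        Disjoint
          (A.toSubmodule ⊓ MvPolynomial.homogeneousSubmodule (Fin (n + 1)) ℝ k ⊓
            LinearMap.ker (polyLaplacian n))
          (Submodule.map (LinearMap.mulLeft ℝ (∑ i, (MvPolynomial.X i) ^ 2))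
            (A.toSubmodule ⊓
              MvPolynomial.homogeneousSubmodule (Fin (n + 1)) ℝ (k - 2)))) ∧
      PowerSeries.mk (fun k =>
          (Module.finrank ℝ
            ↥(A.toSubmodule ⊓ MvPolynomial.homogeneousSubmodule (Fin (n + 1)) ℝ k ⊓
              LinearMap.ker (polyLaplacian n)) : ℝ)) =
        (1 - (PowerSeries.X : PowerSeries ℝ) ^ 2) *
          PowerSeries.mk (fun k =>
            (Module.finrank ℝ
              ↥(A.toSubmodule ⊓
                MvPolynomial.homogeneousSubmodule (Fin (n + 1)) ℝ k) : ℝ)) :=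
  laplacian_algebra_harmonic_decomposition_general n A hr2 hΔ
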